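/- (Ruiz's lower bound for the Coulomb energy) For every alpha > 1/2 there exists c = c(alpha) > 0 such that for any measurable function phi : R^3 → R, ∫∫_{R^3 × R^3} |phi(x)|^2 |phi(y)|^2 / |x-y| dx dy ≥ c ( ∫_{R^3} |phi(x)|^2 / ( |x|^{1/2} (1 + |log|x||)^alpha ) dx )^2. -/

import Mathlib

open MeasureTheory Real Set ENNReal Filter
noncomputable section
abbrev E3 := EuclideanSpace ℝ (Fin 3)

/-- Coulomb energy `∫∫ |φ(x)|²|φ(y)|²/|x-y| dx dy` on `ℝ³`, valued in `[0,∞]`. -/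
def coulomb (φ : E3 → ℝ) : ℝ≥0∞ :=
  ∫⁻ x, ∫⁻ y, ENNReal.ofReal (φ x ^ 2 * φ y ^ 2 / ‖x - y‖)

/-- Squared homogeneous Sobolev seminorm `∫ |ξ|^{2s} |𝓕φ(ξ)|² dξ`, valued in `[0,∞]`. -/
def sobolevSq (s : ℝ) (φ : E3 → ℝ) : ℝ≥0∞ :=
  ∫⁻ ξ : E3, ENNReal.ofReal (‖ξ‖ ^ (2 * s) * ‖FourierTransform.fourier (fun x : E3 => (φ x : ℂ)) ξ‖ ^ 2)

/-- A function on `ℝ³` is radial if it depends only on the norm. -/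
def IsRadial (φ : E3 → ℝ) : Prop := ∀ x y : E3, ‖x‖ = ‖y‖ → φ x = φ y

/-!
Cut `ℝ³ ∖ {0}` into the shells `Aₙ = {eⁿ ≤ |x| < eⁿ⁺¹}`, `n ∈ ℤ`, and put `bₙ = ∫_{Aₙ} φ²`.
A shell has diameter at most `2eⁿ⁺¹`, so keeping only the diagonal blocks `Aₙ × Aₙ` of the
Coulomb integral gives `∑ bₙ² / (2eⁿ⁺¹) ≤ coulomb φ`. On `Aₙ` the weight
`|x|^{-1/2} (1 + |log |x||)^{-α}` is at most `wₙ = e^{-n/2} |n + 1/2|^{-α}`, so the weighted integral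
is at most `∑ wₙ bₙ`, and by Cauchy–Schwarz
`(∑ wₙ bₙ)² ≤ (∑ wₙ² 2eⁿ⁺¹) (∑ bₙ² / (2eⁿ⁺¹))`. The first factor is `2e ∑ |n + 1/2|^{-2α}`,
which is finite since `2α > 1`.
-/

open scoped NNReal Function

namespace ENNReal

variable {ι : Type*}

theorem tsum_mul_sq_le_sq_mul_sq (a b : ι → ℝ≥0∞) :
    (∑' i, a i * b i) ^ 2 ≤ (∑' i, a i ^ 2) * ∑' i, b i ^ 2 := by
  let _ : MeasurableSpace ι := ⊤
  have h := ENNReal.lintegral_mul_le_Lp_mul_Lq Measure.count Real.HolderConjugate.two_two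
    measurable_from_top.aemeasurable measurable_from_top.aemeasurable (f := a) (g := b)
  simp only [Pi.mul_apply, lintegral_count, ENNReal.rpow_two] at h
  calc (∑' i, a i * b i) ^ 2
      ≤ ((∑' i, a i ^ 2) ^ (1 / 2 : ℝ) * (∑' i, b i ^ 2) ^ (1 / 2 : ℝ)) ^ 2 := by gcongr
    _ = (∑' i, a i ^ 2) * ∑' i, b i ^ 2 := by
      rw [mul_pow, ← ENNReal.rpow_two, ← ENNReal.rpow_two, ← ENNReal.rpow_mul, ← ENNReal.rpow_mul]
      norm_num

theorem tsum_mul_sq_le_sq_mul_mul_sq_div (a b : ι → ℝ≥0∞) {c : ι → ℝ≥0} (hc : ∀ i, c i ≠ 0) :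
    (∑' i, a i * b i) ^ 2 ≤ (∑' i, a i ^ 2 * c i) * ∑' i, b i ^ 2 / c i := by
  have hsqrt (i : ι) : ((NNReal.sqrt (c i) : ℝ≥0∞)) ^ 2 = c i := by
    rw [← ENNReal.coe_pow, NNReal.sq_sqrt]
  have hsqrt0 (i : ι) : (NNReal.sqrt (c i) : ℝ≥0∞) ≠ 0 := by simpa using hc i
  convert tsum_mul_sq_le_sq_mul_sq (fun i => a i * NNReal.sqrt (c i))
    (fun i => b i / NNReal.sqrt (c i)) using 3 <;> funext i
  · rw [mul_assoc, ENNReal.mul_div_cancel (hsqrt0 i) ENNReal.coe_ne_top]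
  · rw [mul_pow, hsqrt]
  · rw [div_eq_mul_inv, div_eq_mul_inv, mul_pow, ← ENNReal.inv_pow, hsqrt]


end ENNReal

section ExpShell

variable {E : Type*} [NormedAddCommGroup E] {x y : E} {n : ℤ}

def expShell (n : ℤ) : Set E := {x | x ≠ 0 ∧ ⌊log ‖x‖⌋ = n}

theorem log_norm_mem_Ico_of_mem_expShell (hx : x ∈ expShell n) :
    log ‖x‖ ∈ Ico (n : ℝ) (n + 1) :=
  Int.floor_eq_iff.1 hx.2

theorem norm_lt_exp_of_mem_expShell (hx : x ∈ expShell n) : ‖x‖ < exp (n + 1) :=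
  (log_lt_iff_lt_exp (norm_pos_iff.2 hx.1)).1 (log_norm_mem_Ico_of_mem_expShell hx).2

theorem norm_sub_le_of_mem_expShell (hx : x ∈ expShell n) (hy : y ∈ expShell n) :
    ‖x - y‖ ≤ 2 * exp (n + 1) := by
  linarith [norm_sub_le x y, norm_lt_exp_of_mem_expShell hx, norm_lt_exp_of_mem_expShell hy]

theorem pairwise_disjoint_expShell : Pairwise (Disjoint on (expShell : ℤ → Set E)) :=
  fun _ _ hmn => disjoint_left.2 fun _ hm hn => hmn (hm.2.symm.trans hn.2)

theorem iUnion_expShell : ⋃ n, expShell n = ({0}ᶜ : Set E) := by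
  ext x
  simp [expShell]

theorem measurableSet_expShell [MeasurableSpace E] [OpensMeasurableSpace E] (n : ℤ) :
    MeasurableSet (expShell n : Set E) :=
  isOpen_compl_singleton.measurableSet.inter
    (measurable_norm.log.floor (measurableSet_singleton n))

/-- The shift by `1/2` keeps the weight finite at `n = 0` while still
`|n + 1/2| ≤ 1 + |t|` for `t ∈ [n, n + 1)`. -/
def shellWeight (α : ℝ) (n : ℤ) : ℝ := (exp (n / 2) * |(n : ℝ) + 1 / 2| ^ α)⁻¹

theorem int_add_half_ne_zero (n : ℤ) : (n : ℝ) + 1 / 2 ≠ 0 := by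
  intro h
  have : 2 * n + 1 = 0 := by exact_mod_cast (by linarith : (2 * n + 1 : ℝ) = 0)
  omega

theorem shellWeight_pos (α : ℝ) (n : ℤ) : 0 < shellWeight α n := by
  have := int_add_half_ne_zero n
  unfold shellWeight
  positivity

theorem inv_weight_le_shellWeight {α : ℝ} (hα : 0 ≤ α) (hx : x ∈ expShell n) :
    (‖x‖ ^ (1 / 2 : ℝ) * (1 + |log ‖x‖|) ^ α)⁻¹ ≤ shellWeight α n := by
  obtain ⟨hn, hn1⟩ := log_norm_mem_Ico_of_mem_expShell hx
  have hsqrt : exp (n / 2) ≤ ‖x‖ ^ (1 / 2 : ℝ) := by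
    rw [rpow_def_of_pos (norm_pos_iff.2 hx.1), exp_le_exp]
    linarith
  have hlog : |(n : ℝ) + 1 / 2| ^ α ≤ (1 + |log ‖x‖|) ^ α := by
    have : |(n : ℝ) + 1 / 2 - log ‖x‖| ≤ 1 / 2 := abs_le.2 ⟨by linarith, by linarith⟩
    gcongr
    linarith [abs_sub_abs_le_abs_sub ((n : ℝ) + 1 / 2) (log ‖x‖)]
  have := int_add_half_ne_zero n
  exact inv_anti₀ (by positivity) (mul_le_mul hsqrt hlog (by positivity) (by positivity))


theorem shellWeight_sq_mul (α : ℝ) (n : ℤ) :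
    shellWeight α n ^ 2 * (2 * exp (n + 1)) = 2 * exp 1 / |(n : ℝ) + 1 / 2| ^ (2 * α) := by
  have := int_add_half_ne_zero n
  rw [shellWeight, inv_pow, mul_pow, ← exp_nat_mul, mul_comm 2 α, rpow_mul (abs_nonneg _),
    Real.rpow_two]
  field_simp
  rw [← exp_add]
  ring_nf

theorem summable_shellWeight_sq_mul {α : ℝ} (hα : 1 / 2 < α) :
    Summable fun n : ℤ => shellWeight α n ^ 2 * (2 * exp (n + 1)) := by
  simp_rw [shellWeight_sq_mul, div_eq_mul_one_div (2 * exp 1)]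
  exact ((summable_one_div_int_add_rpow (1 / 2) (2 * α)).2 (by linarith)).mul_left _

variable [MeasurableSpace E] (μ : Measure E) [NullSingletonClass μ]

theorem sq_setLIntegral_div_le_setLIntegral_setLIntegral {s : Set E} (hs : MeasurableSet s)
    {D : ℝ} (hD : 0 < D) (hdiam : ∀ x ∈ s, ∀ y ∈ s, ‖x - y‖ ≤ D) {φ : E → ℝ} (hφ : Measurable φ) :
    (∫⁻ x in s, ENNReal.ofReal (φ x ^ 2) ∂μ) ^ 2 / ENNReal.ofReal D ≤
      ∫⁻ x in s, ∫⁻ y in s, ENNReal.ofReal (φ x ^ 2 * φ y ^ 2 / ‖x - y‖) ∂μ ∂μ := by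
  have hf : Measurable fun x => ENNReal.ofReal (φ x ^ 2) := (hφ.pow_const 2).ennreal_ofReal
  calc (∫⁻ x in s, ENNReal.ofReal (φ x ^ 2) ∂μ) ^ 2 / ENNReal.ofReal D
      = ∫⁻ x in s, ∫⁻ y in s,
          ENNReal.ofReal (φ x ^ 2) * (ENNReal.ofReal (φ y ^ 2) * (ENNReal.ofReal D)⁻¹) ∂μ ∂μ := by
        rw [div_eq_mul_inv, sq, mul_assoc, ← lintegral_mul_const _ hf,
          ← lintegral_mul_const _ hf]
        simp_rw [← lintegral_const_mul _ (hf.mul_const _)]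
    _ ≤ _ := by
        refine setLIntegral_mono_ae' hs (ae_of_all _ fun x hx => ?_)
        refine setLIntegral_mono_ae' hs ((Measure.ae_ne μ x).mono fun y hyx hy => ?_)
        rw [← mul_assoc, ← ENNReal.ofReal_mul (sq_nonneg _), ← div_eq_mul_inv,
          ← ENNReal.ofReal_div_of_pos hD]
        gcongr
        · exact norm_pos_iff.2 (sub_ne_zero.2 hyx.symm)
        · exact hdiam x hx y hy

variable [OpensMeasurableSpace E]

theorem lintegral_weighted_le_tsum_shellWeight_mul {α : ℝ} (hα : 0 ≤ α) (φ : E → ℝ) :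
    ∫⁻ x, ENNReal.ofReal (φ x ^ 2 / (‖x‖ ^ (1 / 2 : ℝ) * (1 + |log ‖x‖|) ^ α)) ∂μ ≤
      ∑' n, ENNReal.ofReal (shellWeight α n) * ∫⁻ x in expShell n, ENNReal.ofReal (φ x ^ 2) ∂μ := by
  calc ∫⁻ x, ENNReal.ofReal (φ x ^ 2 / (‖x‖ ^ (1 / 2 : ℝ) * (1 + |log ‖x‖|) ^ α)) ∂μ
      = ∑' n, ∫⁻ x in expShell n,
          ENNReal.ofReal (φ x ^ 2 / (‖x‖ ^ (1 / 2 : ℝ) * (1 + |log ‖x‖|) ^ α)) ∂μ := by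
        rw [← lintegral_iUnion measurableSet_expShell pairwise_disjoint_expShell, iUnion_expShell,
          restrict_compl_singleton]
    _ ≤ ∑' n, ∫⁻ x in expShell n,
          ENNReal.ofReal (shellWeight α n) * ENNReal.ofReal (φ x ^ 2) ∂μ := by
        refine ENNReal.tsum_le_tsum fun n =>
          setLIntegral_mono' (measurableSet_expShell n) fun x hx => ?_
        rw [← ENNReal.ofReal_mul ((shellWeight_pos α n).le), div_eq_mul_inv, mul_comm]
        gcongr
        exact inv_weight_le_shellWeight hα hx
    _ = _ := by simp_rw [lintegral_const_mul' _ _ ENNReal.ofReal_ne_top]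

theorem tsum_sq_setLIntegral_expShell_div_le {φ : E → ℝ} (hφ : Measurable φ) :
    ∑' n : ℤ, (∫⁻ x in expShell n, ENNReal.ofReal (φ x ^ 2) ∂μ) ^ 2 /
        ENNReal.ofReal (2 * exp (n + 1)) ≤
      ∫⁻ x, ∫⁻ y, ENNReal.ofReal (φ x ^ 2 * φ y ^ 2 / ‖x - y‖) ∂μ ∂μ := by
  calc _ ≤ ∑' n : ℤ, ∫⁻ x in expShell n, ∫⁻ y in expShell n,
          ENNReal.ofReal (φ x ^ 2 * φ y ^ 2 / ‖x - y‖) ∂μ ∂μ :=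
        ENNReal.tsum_le_tsum fun n => sq_setLIntegral_div_le_setLIntegral_setLIntegral μ
          (measurableSet_expShell n) (by positivity)
          (fun x hx y hy => norm_sub_le_of_mem_expShell hx hy) hφ
    _ ≤ ∑' n : ℤ, ∫⁻ x in expShell n, ∫⁻ y, ENNReal.ofReal (φ x ^ 2 * φ y ^ 2 / ‖x - y‖) ∂μ ∂μ := by
        exact ENNReal.tsum_le_tsum fun n => lintegral_mono fun x => setLIntegral_le_lintegral _ _
    _ = ∫⁻ x in ⋃ n, expShell n, ∫⁻ y, ENNReal.ofReal (φ x ^ 2 * φ y ^ 2 / ‖x - y‖) ∂μ ∂μ :=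
        (lintegral_iUnion measurableSet_expShell pairwise_disjoint_expShell _).symm
    _ ≤ _ := setLIntegral_le_lintegral _ _

end ExpShell

theorem ruiz_coulomb_lower_bound (α : ℝ) (hα : 1/2 < α) :
    ∃ c : ℝ, 0 < c ∧ ∀ φ : E3 → ℝ, Measurable φ →
      ENNReal.ofReal c *
        (∫⁻ x : E3, ENNReal.ofReal
          (φ x ^ 2 / (‖x‖ ^ ((1:ℝ)/2) * (1 + |Real.log ‖x‖|) ^ α))) ^ 2 ≤
      coulomb φ := by
  set S := ∑' n : ℤ, shellWeight α n ^ 2 * (2 * exp (n + 1))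
  have hS := summable_shellWeight_sq_mul hα
  have hSpos : 0 < S :=
    hS.tsum_pos (fun n => by positivity) 0
      (mul_pos (pow_pos (shellWeight_pos α 0) 2) (by positivity))
  refine ⟨S⁻¹, inv_pos.2 hSpos, fun φ hφ => ?_⟩
  set b : ℤ → ℝ≥0∞ := fun n => ∫⁻ x in expShell n, ENNReal.ofReal (φ x ^ 2)
  have hweights : ∑' n : ℤ, ENNReal.ofReal (shellWeight α n) ^ 2 * (2 * exp (n + 1)).toNNReal =
      ENNReal.ofReal S := by
    rw [ENNReal.ofReal_tsum_of_nonneg (fun n => by positivity) hS]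
    refine tsum_congr fun n => ?_
    rw [ENNReal.ofReal_mul (by positivity), ENNReal.ofReal_pow (shellWeight_pos α n).le]
    rfl
  calc ENNReal.ofReal S⁻¹ * (∫⁻ x, _) ^ 2
      ≤ ENNReal.ofReal S⁻¹ * (∑' n, ENNReal.ofReal (shellWeight α n) * b n) ^ 2 := by
        gcongr
        exact lintegral_weighted_le_tsum_shellWeight_mul volume (by linarith) φ
    _ ≤ ENNReal.ofReal S⁻¹ * (ENNReal.ofReal S * ∑' n, b n ^ 2 / (2 * exp (n + 1)).toNNReal) := by
        rw [← hweights]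
        gcongr
        exact ENNReal.tsum_mul_sq_le_sq_mul_mul_sq_div _ _
          fun n => (Real.toNNReal_pos.2 (by positivity)).ne'
    _ ≤ ENNReal.ofReal S⁻¹ * (ENNReal.ofReal S * coulomb φ) := by
        gcongr
        exact tsum_sq_setLIntegral_expShell_div_le volume hφ
    _ = coulomb φ := by
        rw [← mul_assoc, ← ENNReal.ofReal_mul (inv_nonneg.2 hSpos.le), inv_mul_cancel₀ hSpos.ne',
          ENNReal.ofReal_one, one_mul]
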